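/- Let ρ and σ be runs of a one-counter automaton A with n states, with effect(ρ) ≥ n³ and effect(σ) ≤ −n³. Then one can factorize ρ = ρ₁·α·ρ₂ and σ = σ₁·β·σ₂ such that (α, β) forms a direction: α is a cycle on its initial state, β is a cycle on its initial state, 0 < |α| + |β|, effect(α) ≥ 0, and effect(α) + effect(β) = 0. -/

import Mathlib

/-- A transition of a one-counter automaton without zero tests:
(source state, optional letter read, counter change, target state). -/
abbrev Tr (Q A : Type) : Type := Q × Option A × ℤ × Q

/-- Source state of a transition. -/
def Tr.src {Q A : Type} (t : Tr Q A) : Q := t.1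
/-- Target state of a transition. -/
def Tr.tgt {Q A : Type} (t : Tr Q A) : Q := t.2.2.2
/-- Counter change of a transition. -/
def Tr.wt {Q A : Type} (t : Tr Q A) : ℤ := t.2.2.1
/-- Letter (or ε) read by a transition. -/
def Tr.lab {Q A : Type} (t : Tr Q A) : Option A := t.2.1

/-- The effect of a walk on the counter: total counter change. -/
def effect {Q A : Type} (l : List (Tr Q A)) : ℤ := (l.map Tr.wt).sum

/-- The word read along a walk. -/
def word {Q A : Type} (l : List (Tr Q A)) : List A := l.filterMap Tr.lab

/-- A walk of the automaton M: a sequence of transitions of M with matching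
intermediate states. -/
def IsWalk {Q A : Type} (M : Set (Tr Q A)) (l : List (Tr Q A)) : Prop :=
  (∀ t ∈ l, t ∈ M) ∧ l.Chain' (fun t t' => t.tgt = t'.src)

/-- The state visited at position i (0 ≤ i ≤ length) of a walk starting at p. -/
def stateAt {Q A : Type} (p : Q) (l : List (Tr Q A)) (i : ℕ) : Q :=
  match (l.drop i).head? with
  | some t => t.src
  | none => (l.getLast?.map Tr.tgt).getD p

/-- The counter value at position i of a walk starting at counter value c. -/
def counterAt {Q A : Type} (c : ℤ) (l : List (Tr Q A)) (i : ℕ) : ℤ :=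
  c + effect (l.take i)

/-- drop of a walk: the minimal counter value needed at its start so that the
counter stays nonnegative throughout (maximum over prefixes of minus the
prefix effect). -/
def dropVal {Q A : Type} (l : List (Tr Q A)) : ℤ :=
  (l.inits.map fun pfx => -effect pfx).foldr max 0

/-- A valid run of M starting in configuration (p, c): a walk starting in
state p whose counter values all stay nonnegative. -/
def ValidFrom {Q A : Type} (M : Set (Tr Q A)) (p : Q) (c : ℤ) (l : List (Tr Q A)) : Prop :=
  IsWalk M l ∧ (∀ t ∈ l.head?, t.src = p) ∧ 0 ≤ c ∧
    ∀ i ≤ l.length, 0 ≤ counterAt c l i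

/-- A walk of M from state p to state q. -/
def WalkFromTo {Q A : Type} (M : Set (Tr Q A)) (p : Q) (l : List (Tr Q A)) (q : Q) : Prop :=
  IsWalk M l ∧ (∀ t ∈ l.head?, t.src = p) ∧ (∀ t ∈ l.getLast?, t.tgt = q) ∧
    (l = [] → p = q)

private lemma my_ivt (f : ℕ → ℤ) (m : ℕ) (h : ∀ i < m, f (i+1) ≤ f i + 1) (v : ℤ)
    (h0 : f 0 ≤ v) (hm : v ≤ f m) : ∃ i ≤ m, f i = v := by
  classical
  have hex : ∃ i, v ≤ f i := ⟨m, hm⟩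
  have hP : v ≤ f (Nat.find hex) := Nat.find_spec hex
  have hle : Nat.find hex ≤ m := Nat.find_min' hex hm
  rcases Nat.eq_zero_or_pos (Nat.find hex) with h0' | hpos
  · exact ⟨0, Nat.zero_le m, le_antisymm h0 (h0' ▸ hP)⟩
  · have hk : ¬ v ≤ f (Nat.find hex - 1) := Nat.find_min hex (by omega)
    have hstep := h (Nat.find hex - 1) (by omega)
    have heq : Nat.find hex - 1 + 1 = Nat.find hex := by omega
    rw [heq] at hstep
    exact ⟨Nat.find hex, hle, by omega⟩

private lemma effect_append {Q A : Type} (a b : List (Tr Q A)) :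
    effect (a ++ b) = effect a + effect b := by
  simp [effect]

private lemma counterAt_succ {Q A : Type} (c : ℤ) (l : List (Tr Q A)) (i : ℕ) (h : i < l.length) :
    counterAt c l (i+1) = counterAt c l i + (l[i]).wt := by
  unfold counterAt
  rw [List.take_succ, List.getElem?_eq_getElem h, Option.toList_some, effect_append]
  simp [effect, add_assoc]

private lemma stateAt_eq_src {Q A : Type} (p : Q) (l : List (Tr Q A)) (i : ℕ) (t : Tr Q A)
    (h : l[i]? = some t) : stateAt p l i = t.src := by
  unfold stateAt
  rw [List.head?_drop, h]

private lemma stateAt_length {Q A : Type} (p : Q) (l : List (Tr Q A)) (hne : l ≠ []) :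
    stateAt p l l.length = (l.getLast hne).tgt := by
  unfold stateAt
  rw [List.drop_length, List.head?_nil, List.getLast?_eq_getLast hne]
  rfl

private lemma factor_spec {Q A : Type} (M : Set (Tr Q A)) (p : Q) (l : List (Tr Q A))
    (hw : IsWalk M l) (i j : ℕ) (hij : i < j) (hjl : j ≤ l.length) :
    ∃ m, l = l.take i ++ m ++ l.drop j ∧ m ≠ [] ∧
      IsWalk M m ∧ (∀ t ∈ m.head?, t.src = stateAt p l i) ∧
      (∀ t ∈ m.getLast?, t.tgt = stateAt p l j) ∧
      (∀ c : ℤ, effect m = counterAt c l j - counterAt c l i) := by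
  classical
  set m : List (Tr Q A) := (l.drop i).take (j - i) with hm
  have hil : i < l.length := lt_of_lt_of_le hij hjl
  have hmlen : m.length = j - i := by
    rw [hm, List.length_take, List.length_drop]; omega
  have hne : m ≠ [] := by
    intro h
    rw [h] at hmlen; simp at hmlen; omega
  have hgk : ∀ k, k < j - i → m[k]? = l[i+k]? := by
    intro k hk
    rw [hm, List.getElem?_take, if_pos hk, List.getElem?_drop]
  have h1 : m ++ l.drop j = l.drop i := by
    have h2 : l.drop j = (l.drop i).drop (j - i) := by
      rw [List.drop_drop]; congr 1; omega
    rw [h2, hm, List.take_append_drop]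
  have hdec : l = l.take i ++ m ++ l.drop j := by
    rw [List.append_assoc, h1, List.take_append_drop]
  have hwalk : IsWalk M m := by
    constructor
    · intro t ht
      exact hw.1 t (List.mem_of_mem_drop (List.mem_of_mem_take ht))
    · exact hw.2.infix ⟨l.take i, l.drop j, hdec.symm⟩
  have hm0 : m.head? = some (l[i]'hil) := by
    rw [List.head?_eq_getElem?, hgk 0 (by omega)]
    simp [List.getElem?_eq_getElem hil]
  have hjm1 : j - 1 < l.length := by omega
  have hml : m.getLast? = some (l[j-1]'hjm1) := by
    have hidx : i + (j - i - 1) = j - 1 := by omega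
    rw [List.getLast?_eq_getLast hne, List.getLast_eq_getElem, ← List.getElem?_eq_getElem,
      hmlen, hgk (j - i - 1) (by omega), hidx, List.getElem?_eq_getElem hjm1]
  refine ⟨m, hdec, hne, hwalk, ?_, ?_, ?_⟩
  · intro t ht
    rw [hm0, Option.mem_some_iff] at ht
    subst ht
    exact (stateAt_eq_src p l i _ (List.getElem?_eq_getElem hil)).symm
  · intro t ht
    rw [hml, Option.mem_some_iff] at ht
    subst ht
    rcases eq_or_lt_of_le hjl with hjeq | hjlt
    · have hlne : l ≠ [] := by intro h; rw [h] at hil; simp at hil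
      subst hjeq
      rw [stateAt_length p l hlne, List.getLast_eq_getElem]
    · have hsj : stateAt p l j = (l[j]'hjlt).src :=
        stateAt_eq_src p l j _ (List.getElem?_eq_getElem hjlt)
      rw [hsj]
      have hc := List.isChain_iff_getElem.mp hw.2 (j-1) (by omega)
      have he : l[j-1+1]'(by omega) = l[j]'hjlt := by
        have : l[j-1+1]? = l[j]? := by congr 1; omega
        rw [List.getElem?_eq_getElem (show j-1+1 < l.length by omega),
          List.getElem?_eq_getElem hjlt] at this
        exact Option.some_injective _ this
      rw [he] at hc
      exact hc
  · intro c
    have ht : l.take j = l.take i ++ m := by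
      rw [hm, ← List.take_add]
      congr 1
      omega
    unfold counterAt effect
    rw [ht]
    simp

/-- Existence of a direction inside a split run: if ρ and σ are runs of an
OCA with n states (counter changes at most 1 per step) with effect(ρ) ≥ n³ and
effect(σ) ≤ −n³, then ρ = ρ₁·α·ρ₂ and σ = σ₁·β·σ₂ where α and β are cycles,
0 < |α| + |β|, effect(α) ≥ 0, and effect(α) + effect(β) = 0. -/
theorem exists_direction_in_split {Q A : Type} [Fintype Q]
    (M : Set (Tr Q A))
    (hM : ∀ t ∈ M, Tr.wt t = 1 ∨ Tr.wt t = -1 ∨ Tr.wt t = 0)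
    (pr ps : Q) (cr cs : ℤ) (ρ σ : List (Tr Q A))
    (hρ : ValidFrom M pr cr ρ) (hσ : ValidFrom M ps cs σ)
    (heρ : ((Fintype.card Q : ℤ)) ^ 3 ≤ effect ρ)
    (heσ : effect σ ≤ -((Fintype.card Q : ℤ)) ^ 3) :
    ∃ (ρ₁ al ρ₂ σ₁ bl σ₂ : List (Tr Q A)) (a b : Q),
      ρ = ρ₁ ++ al ++ ρ₂ ∧ σ = σ₁ ++ bl ++ σ₂ ∧
      WalkFromTo M a al a ∧ WalkFromTo M b bl b ∧
      0 < al.length + bl.length ∧ 0 ≤ effect al ∧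
      effect al + effect bl = 0 := by
  classical
  set n := Fintype.card Q with hn
  have hn1 : 1 ≤ n := @Fintype.card_pos Q _ ⟨pr⟩
  set N := n ^ 3 with hN
  obtain ⟨hwρ, -, -, -⟩ := hρ
  obtain ⟨hwσ, -, -, -⟩ := hσ
  -- step bounds
  have stepb : ∀ (l : List (Tr Q A)) (c : ℤ), IsWalk M l → ∀ i, i < l.length →
      counterAt c l (i+1) ≤ counterAt c l i + 1 ∧ counterAt c l i - 1 ≤ counterAt c l (i+1) := by
    intro l c hl i hi
    rw [counterAt_succ c l i hi]
    have hm := hl.1 _ (List.getElem_mem hi)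
    rcases hM _ hm with h | h | h <;> rw [h] <;> omega
  have hNcast : ((N : ℤ)) = (n : ℤ) ^ 3 := by rw [hN]; push_cast; ring
  -- counter at the end
  have hfin : ∀ (l : List (Tr Q A)) (c : ℤ), counterAt c l l.length = c + effect l := by
    intro l c; unfold counterAt; rw [List.take_length]
  -- hitting levels in ρ
  have hexρ : ∀ c : Fin (N+1), ∃ i, counterAt cr ρ i = cr + (c : ℕ) ∧ i ≤ ρ.length := by
    intro c
    obtain ⟨i, hi, hieq⟩ := my_ivt (counterAt cr ρ) ρ.length
      (fun i hi => (stepb ρ cr hwρ i hi).1) (cr + (c : ℕ))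
      (by unfold counterAt effect; simp)
      (by
        rw [hfin]
        have h1 : ((c : ℕ) : ℤ) ≤ (N : ℤ) := by exact_mod_cast Nat.lt_succ_iff.mp c.2
        rw [hNcast] at h1
        linarith)
    exact ⟨i, hieq, hi⟩
  have hexρ' : ∀ c : Fin (N+1), ∃ i, counterAt cr ρ i = cr + (c : ℕ) :=
    fun c => ⟨(hexρ c).choose, (hexρ c).choose_spec.1⟩
  set P : Fin (N+1) → ℕ := fun c => Nat.find (hexρ' c) with hP
  have hPval : ∀ c, counterAt cr ρ (P c) = cr + (c : ℕ) := fun c => Nat.find_spec (hexρ' c)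
  have hPle : ∀ c, P c ≤ ρ.length := by
    intro c
    obtain ⟨i, hi, hil⟩ := hexρ c
    exact le_trans (Nat.find_min' _ hi) hil
  have hPmono : ∀ a b : Fin (N+1), (a : ℕ) < (b : ℕ) → P a < P b := by
    intro a b hab
    obtain ⟨i, hi, hieq⟩ := my_ivt (counterAt cr ρ) (P b)
      (fun i hi => (stepb ρ cr hwρ i (lt_of_lt_of_le hi (hPle b))).1) (cr + (a : ℕ))
      (by unfold counterAt effect; simp)
      (by rw [hPval b]; omega)
    have h1 : P a ≤ i := Nat.find_min' _ hieq
    have h2 : P a ≠ P b := by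
      intro h
      have := hPval a
      rw [h, hPval b] at this
      omega
    omega
  -- hitting levels in σ (descending)
  have hexσ : ∀ c : Fin (N+1), ∃ i, counterAt cs σ i = cs - (c : ℕ) ∧ i ≤ σ.length := by
    intro c
    obtain ⟨i, hi, hieq⟩ := my_ivt (fun i => -counterAt cs σ i) σ.length
      (fun i hi => by
        have h2 := (stepb σ cs hwσ i hi).2
        show -counterAt cs σ (i+1) ≤ -counterAt cs σ i + 1
        omega)
      (-(cs - (c : ℕ)))
      (by show -counterAt cs σ 0 ≤ _; unfold counterAt effect; simp)
      (by
        show _ ≤ -counterAt cs σ σ.length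
        rw [hfin]
        have h1 : ((c : ℕ) : ℤ) ≤ (N : ℤ) := by exact_mod_cast Nat.lt_succ_iff.mp c.2
        rw [hNcast] at h1
        linarith)
    have hieq' : -counterAt cs σ i = -(cs - (c : ℕ)) := hieq
    exact ⟨i, by omega, hi⟩
  have hexσ' : ∀ c : Fin (N+1), ∃ i, counterAt cs σ i = cs - (c : ℕ) :=
    fun c => ⟨(hexσ c).choose, (hexσ c).choose_spec.1⟩
  set R : Fin (N+1) → ℕ := fun c => Nat.find (hexσ' c) with hR
  have hRval : ∀ c, counterAt cs σ (R c) = cs - (c : ℕ) := fun c => Nat.find_spec (hexσ' c)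
  have hRle : ∀ c, R c ≤ σ.length := by
    intro c
    obtain ⟨i, hi, hil⟩ := hexσ c
    exact le_trans (Nat.find_min' _ hi) hil
  have hRmono : ∀ a b : Fin (N+1), (a : ℕ) < (b : ℕ) → R a < R b := by
    intro a b hab
    obtain ⟨i, hi, hieq⟩ := my_ivt (fun i => -counterAt cs σ i) (R b)
      (fun i hi => by
        have h2 := (stepb σ cs hwσ i (lt_of_lt_of_le hi (hRle b))).2
        show -counterAt cs σ (i+1) ≤ -counterAt cs σ i + 1
        omega)
      (-(cs - (a : ℕ)))
      (by show -counterAt cs σ 0 ≤ _; unfold counterAt effect; simp)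
      (by show _ ≤ -counterAt cs σ (R b); have h3 := hRval b; omega)
    have hieq' : counterAt cs σ i = cs - (a : ℕ) := by
      have : -counterAt cs σ i = -(cs - (a : ℕ)) := hieq
      omega
    have h1 : R a ≤ i := Nat.find_min' _ hieq'
    have h2 : R a ≠ R b := by
      intro h
      have := hRval a
      rw [h, hRval b] at this
      omega
    omega
  -- pigeonhole
  set u : Fin (N+1) → Q := fun c => stateAt ps σ (R c) with hu
  set v : Fin (N+1) → Q := fun c => stateAt pr ρ (P c) with hv
  obtain ⟨r, -, hr⟩ := Finset.exists_lt_card_fiber_of_mul_lt_card_of_maps_to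
    (s := (Finset.univ : Finset (Fin (N+1)))) (t := (Finset.univ : Finset Q))
    (f := u) (n := n^2) (fun a _ => Finset.mem_univ _)
    (by
      rw [Finset.card_univ, Finset.card_univ, Fintype.card_fin]
      have h3 : Fintype.card Q * n^2 = N := by rw [hN, ← hn]; ring
      exact lt_of_le_of_lt h3.le (Nat.lt_succ_self N))
  set S := Finset.filter (fun x => u x = r) Finset.univ with hS
  have hcard : (Finset.univ : Finset Q).card < S.card := by
    rw [Finset.card_univ]
    have h4 : n ≤ n ^ 2 := Nat.le_self_pow two_ne_zero n
    omega
  obtain ⟨a0, ha0, b0, hb0, hab0, hvab0⟩ :=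
    Finset.exists_ne_map_eq_of_card_lt_of_maps_to hcard (f := v) (fun a _ => Finset.mem_univ _)
  obtain ⟨a, b, hab, hva, hua, hub⟩ :
      ∃ a b : Fin (N+1), (a : ℕ) < (b : ℕ) ∧ v a = v b ∧ u a = r ∧ u b = r := by
    rcases lt_or_gt_of_ne hab0 with h | h
    · exact ⟨a0, b0, h, hvab0, (Finset.mem_filter.mp ha0).2, (Finset.mem_filter.mp hb0).2⟩
    · exact ⟨b0, a0, h, hvab0.symm, (Finset.mem_filter.mp hb0).2, (Finset.mem_filter.mp ha0).2⟩
  -- extract the cycles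
  obtain ⟨al, hdecρ, hneal, hwal, hheadal, hlastal, heffal⟩ :=
    factor_spec M pr ρ hwρ (P a) (P b) (hPmono a b hab) (hPle b)
  obtain ⟨bl, hdecσ, hnebl, hwbl, hheadbl, hlastbl, heffbl⟩ :=
    factor_spec M ps σ hwσ (R a) (R b) (hRmono a b hab) (hRle b)
  have heffal' : effect al = ((b : ℕ) : ℤ) - ((a : ℕ) : ℤ) := by
    rw [heffal cr, hPval a, hPval b]; ring
  have heffbl' : effect bl = ((a : ℕ) : ℤ) - ((b : ℕ) : ℤ) := by
    rw [heffbl cs, hRval a, hRval b]; ring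
  refine ⟨ρ.take (P a), al, ρ.drop (P b), σ.take (R a), bl, σ.drop (R b),
    stateAt pr ρ (P a), stateAt ps σ (R a), hdecρ, hdecσ, ?_, ?_, ?_, ?_, ?_⟩
  · refine ⟨hwal, hheadal, ?_, fun _ => rfl⟩
    intro t ht
    rw [hlastal t ht]
    exact hva.symm
  · refine ⟨hwbl, hheadbl, ?_, fun _ => rfl⟩
    intro t ht
    rw [hlastbl t ht]
    rw [show stateAt ps σ (R b) = u b from rfl, show stateAt ps σ (R a) = u a from rfl, hua, hub]
  · have := List.length_pos_iff.mpr hneal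
    omega
  · rw [heffal']
    omega
  · rw [heffal', heffbl']
    ring
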